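/- Let G be a connected finite simple graph on Fin n with strictly positive edge weights and signed weighted Laplacian L (a positive semidefinite graph Laplacian). Let K ≥ 1 and, for each k ∈ Fin K, fix distinct vertices i_k ≠ j_k, a constant c_k > 0, and v_k : Fin n → ℝ with L v_k = e_{i_k} - e_{j_k}; set r_k = v_k(i_k) - v_k(j_k). Define J = ∑_{k} c_k·(e_{i_k} - e_{j_k})(e_{i_k} - e_{j_k})ᵀ - L. Then: if ∑_{k} c_k r_k < 1, J is negative definite on mean-zero vectors (xᵀ J x < 0 for all nonzero x with ∑ x = 0); and if c_k r_k > 1 for some k, then J has a strictly positive eigenvalue. -/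

import Mathlib

open Matrix

/-- The signed weighted Laplacian of a simple graph `G` on `Fin n` with real edge
weights `w` (with `w i j = w j i` on edges). -/
def signedLaplacian {n : ℕ} (G : SimpleGraph (Fin n)) [DecidableRel G.Adj]
    (w : Fin n → Fin n → ℝ) : Matrix (Fin n) (Fin n) ℝ :=
  fun i j =>
    if i = j then ∑ k ∈ G.neighborFinset i, w i k
    else if G.Adj i j then -w i j else 0

/-!
Write `b_k = e_{i_k} - e_{j_k} = L v_k`, so that `r_k = b_kᵀ v_k = v_kᵀ L v_k`. Cauchy–Schwarz
for the positive semidefinite form `(y, z) ↦ yᵀ L z` gives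
`(b_kᵀ x)² = (v_kᵀ L x)² ≤ r_k · xᵀ L x`, hence `xᵀ J x ≤ (∑ c_k r_k - 1) · xᵀ L x`; on a connected
graph `xᵀ L x > 0` unless `x` is constant.
Conversely `v_kᵀ J v_k ≥ c_k r_k² - r_k = r_k (c_k r_k - 1) > 0`, and a symmetric matrix with a
positive Rayleigh quotient has a positive eigenvalue.
-/

section
variable {ι κ : Type*} [Fintype ι] [Fintype κ]

lemma Matrix.PosSemidef.sq_dotProduct_le_of_mulVec_eq {A : Matrix ι ι ℝ} (hA : A.PosSemidef)
    {v b : ι → ℝ} (hv : A *ᵥ v = b) (x : ι → ℝ) :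
    (b ⬝ᵥ x) ^ 2 ≤ (b ⬝ᵥ v) * (x ⬝ᵥ A *ᵥ x) := by
  classical
  have hsymm : ∀ y z : ι → ℝ, y ⬝ᵥ A *ᵥ z = z ⬝ᵥ A *ᵥ y := fun y z => by
    rw [dotProduct_mulVec, ← mulVec_transpose, ← conjTranspose_eq_transpose_of_trivial,
      hA.isHermitian.eq, dotProduct_comm]
  have hcs := LinearMap.BilinForm.apply_mul_apply_le_of_forall_zero_le (toBilin' A)
    (fun y => by simpa [toBilin'_apply'] using hA.dotProduct_mulVec_nonneg y) v x
  simp only [toBilin'_apply'] at hcs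
  rwa [hsymm v x, hv, ← sq, dotProduct_comm x b, dotProduct_comm v b] at hcs

lemma dotProduct_sum_smul_vecMulVec_self_mulVec (c : κ → ℝ) (b : κ → ι → ℝ) (x : ι → ℝ) :
    x ⬝ᵥ (∑ k, c k • vecMulVec (b k) (b k)) *ᵥ x = ∑ k, c k * (b k ⬝ᵥ x) ^ 2 := by
  simp only [sum_mulVec, dotProduct_sum, smul_mulVec, dotProduct_smul, vecMulVec_mulVec]
  refine Finset.sum_congr rfl fun k _ => ?_
  simp [dotProduct_comm x (b k), sq, smul_eq_mul]

lemma Matrix.IsHermitian.exists_pos_eigenvalue_of_dotProduct_mulVec_pos {A : Matrix ι ι ℝ}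
    (hA : A.IsHermitian) {x : ι → ℝ} (hx : 0 < x ⬝ᵥ A *ᵥ x) :
    ∃ μ : ℝ, 0 < μ ∧ ∃ z : ι → ℝ, z ≠ 0 ∧ A *ᵥ z = μ • z := by
  classical
  by_contra! h
  have hneg : (-A).PosSemidef := by
    refine hA.neg.posSemidef_iff_eigenvalues_nonneg.mpr fun t => ?_
    by_contra! ht
    set u : ι → ℝ := ⇑(hA.neg.eigenvectorBasis t)
    have hu : A *ᵥ u = (-hA.neg.eigenvalues t) • u := by
      rw [neg_smul, ← hA.neg.mulVec_eigenvectorBasis t, neg_mulVec, neg_neg]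
    have hu0 : u ≠ 0 := by simpa [u] using hA.neg.eigenvectorBasis.orthonormal.ne_zero t
    exact h _ (neg_pos.mpr ht) u hu0 hu
  have := hneg.dotProduct_mulVec_nonneg x
  rw [star_trivial, neg_mulVec, dotProduct_neg] at this
  linarith

section
variable {A : Matrix ι ι ℝ} {b v : κ → ι → ℝ} {c : κ → ℝ}

lemma Matrix.PosSemidef.dotProduct_sum_vecMulVec_sub_mulVec_neg (hA : A.PosSemidef)
    (hv : ∀ k, A *ᵥ v k = b k) (hc : ∀ k, 0 ≤ c k) (hsum : ∑ k, c k * (b k ⬝ᵥ v k) < 1)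
    {x : ι → ℝ} (hx : 0 < x ⬝ᵥ A *ᵥ x) :
    x ⬝ᵥ (∑ k, c k • vecMulVec (b k) (b k) - A) *ᵥ x < 0 := by
  rw [sub_mulVec, dotProduct_sub, dotProduct_sum_smul_vecMulVec_self_mulVec]
  calc ∑ k, c k * (b k ⬝ᵥ x) ^ 2 - x ⬝ᵥ A *ᵥ x
      ≤ ∑ k, c k * ((b k ⬝ᵥ v k) * (x ⬝ᵥ A *ᵥ x)) - x ⬝ᵥ A *ᵥ x := by
        gcongr with k
        exacts [hc k, hA.sq_dotProduct_le_of_mulVec_eq (hv k) x]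
    _ = (∑ k, c k * (b k ⬝ᵥ v k) - 1) * (x ⬝ᵥ A *ᵥ x) := by
        simp only [sub_mul, Finset.sum_mul, one_mul, mul_assoc]
    _ < 0 := mul_neg_of_neg_of_pos (sub_neg.mpr hsum) hx

lemma Matrix.PosSemidef.exists_pos_eigenvalue_sum_vecMulVec_sub (hA : A.PosSemidef)
    (hv : ∀ k, A *ᵥ v k = b k) (hc : ∀ k, 0 ≤ c k) {k : κ} (hk : 1 < c k * (b k ⬝ᵥ v k)) :
    ∃ μ : ℝ, 0 < μ ∧ ∃ z : ι → ℝ, z ≠ 0 ∧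
      (∑ k, c k • vecMulVec (b k) (b k) - A) *ᵥ z = μ • z := by
  have hJ : (∑ k, c k • vecMulVec (b k) (b k) - A).IsHermitian := by
    refine (posSemidef_sum _ fun l _ => ?_).isHermitian.sub hA.isHermitian
    simpa using (posSemidef_vecMulVec_self_star (b l)).smul (hc l)
  refine hJ.exists_pos_eigenvalue_of_dotProduct_mulVec_pos (x := v k) ?_
  have hAv : v k ⬝ᵥ A *ᵥ v k = b k ⬝ᵥ v k := by rw [hv, dotProduct_comm]
  have hr : 0 < b k ⬝ᵥ v k := by
    have := hA.dotProduct_mulVec_nonneg (v k)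
    rw [star_trivial, hAv] at this
    exact this.lt_of_ne' fun h => by simp [h] at hk; linarith
  have hsingle : c k * (b k ⬝ᵥ v k) ^ 2 ≤ ∑ l, c l * (b l ⬝ᵥ v k) ^ 2 :=
    Finset.single_le_sum (f := fun l => c l * (b l ⬝ᵥ v k) ^ 2)
      (fun l _ => mul_nonneg (hc l) (sq_nonneg _)) (Finset.mem_univ k)
  rw [sub_mulVec, dotProduct_sub, dotProduct_sum_smul_vecMulVec_self_mulVec, hAv]
  nlinarith
end

end

section
variable {n : ℕ} (G : SimpleGraph (Fin n)) [DecidableRel G.Adj] (w : Fin n → Fin n → ℝ)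

lemma signedLaplacian_apply (a b : Fin n) :
    signedLaplacian G w a b =
      (if a = b then ∑ k ∈ G.neighborFinset a, w a k else 0) - if G.Adj a b then w a b else 0 := by
  by_cases hab : a = b
  · subst hab; simp [signedLaplacian]
  · simp only [signedLaplacian, hab, if_false]
    split_ifs <;> simp

lemma signedLaplacian_mulVec_apply (x : Fin n → ℝ) (a : Fin n) :
    (signedLaplacian G w *ᵥ x) a = ∑ b ∈ G.neighborFinset a, w a b * (x a - x b) := by
  simp only [mulVec, dotProduct, signedLaplacian_apply, sub_mul, Finset.sum_sub_distrib, ite_mul,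
    zero_mul, Finset.sum_ite_eq, Finset.mem_univ, if_true, ← Finset.sum_filter,
    ← SimpleGraph.neighborFinset_eq_filter, mul_sub, Finset.sum_mul]

lemma isHermitian_signedLaplacian (hsymm : ∀ a b, w a b = w b a) :
    (signedLaplacian G w).IsHermitian := by
  ext a b
  by_cases hab : a = b
  · subst hab; rfl
  · simp [signedLaplacian, hab, Ne.symm hab, G.adj_comm, hsymm b a]

lemma dotProduct_signedLaplacian_mulVec (hsymm : ∀ a b, w a b = w b a) (x : Fin n → ℝ) :
    x ⬝ᵥ signedLaplacian G w *ᵥ x =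
      (∑ a, ∑ b ∈ G.neighborFinset a, w a b * (x a - x b) ^ 2) / 2 := by
  have hswap : ∑ a, ∑ b ∈ G.neighborFinset a, w a b * (x a * (x a - x b)) =
      ∑ a, ∑ b ∈ G.neighborFinset a, w a b * (x b * (x b - x a)) := by
    rw [Finset.sum_comm' (t' := Finset.univ) (s' := fun b => G.neighborFinset b)
      (by simp [G.adj_comm])]
    simp only [hsymm]
  have hform : x ⬝ᵥ signedLaplacian G w *ᵥ x =
      ∑ a, ∑ b ∈ G.neighborFinset a, w a b * (x a * (x a - x b)) := by
    simp only [dotProduct, signedLaplacian_mulVec_apply, Finset.mul_sum]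
    refine Finset.sum_congr rfl fun a _ => Finset.sum_congr rfl fun b _ => by ring
  rw [hform, eq_div_iff two_ne_zero, mul_two]
  nth_rewrite 2 [hswap]
  rw [← Finset.sum_add_distrib]
  refine Finset.sum_congr rfl fun a _ => ?_
  rw [← Finset.sum_add_distrib]
  refine Finset.sum_congr rfl fun b _ => by ring

lemma posSemidef_signedLaplacian (hsymm : ∀ a b, w a b = w b a)
    (hpos : ∀ a b, G.Adj a b → 0 < w a b) : (signedLaplacian G w).PosSemidef := by
  refine .of_dotProduct_mulVec_nonneg (isHermitian_signedLaplacian G w hsymm) fun x => ?_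
  rw [star_trivial, dotProduct_signedLaplacian_mulVec G w hsymm]
  refine div_nonneg (Finset.sum_nonneg fun a _ => Finset.sum_nonneg fun b hb => ?_) zero_le_two
  exact mul_nonneg (hpos a b ((G.mem_neighborFinset a b).mp hb)).le (sq_nonneg _)

lemma eq_of_adj_of_dotProduct_signedLaplacian_mulVec_eq_zero (hsymm : ∀ a b, w a b = w b a)
    (hpos : ∀ a b, G.Adj a b → 0 < w a b) {x : Fin n → ℝ}
    (hx : x ⬝ᵥ signedLaplacian G w *ᵥ x = 0) {a b : Fin n} (hab : G.Adj a b) : x a = x b := by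
  have hterm : ∀ a, ∀ b ∈ G.neighborFinset a, 0 ≤ w a b * (x a - x b) ^ 2 := fun a b hb =>
    mul_nonneg (hpos a b ((G.mem_neighborFinset a b).mp hb)).le (sq_nonneg _)
  rw [dotProduct_signedLaplacian_mulVec G w hsymm, div_eq_zero_iff, or_iff_left two_ne_zero,
    Finset.sum_eq_zero_iff_of_nonneg fun a _ => Finset.sum_nonneg (hterm a)] at hx
  have hb : b ∈ G.neighborFinset a := (G.mem_neighborFinset a b).mpr hab
  have := (Finset.sum_eq_zero_iff_of_nonneg (hterm a)).mp (hx a (Finset.mem_univ a)) b hb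
  rw [mul_eq_zero, or_iff_right (hpos a b hab).ne', sq_eq_zero_iff, sub_eq_zero] at this
  exact this

lemma dotProduct_signedLaplacian_mulVec_pos (hconn : G.Connected)
    (hsymm : ∀ a b, w a b = w b a) (hpos : ∀ a b, G.Adj a b → 0 < w a b) {x : Fin n → ℝ}
    (hx : x ≠ 0) (hsum : ∑ a, x a = 0) : 0 < x ⬝ᵥ signedLaplacian G w *ᵥ x := by
  refine ((posSemidef_signedLaplacian G w hsymm hpos).dotProduct_mulVec_nonneg x).lt_of_ne' ?_
  rw [star_trivial]
  intro hzero
  have hconst : ∀ a b, x a = x b := fun a b => by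
    obtain ⟨p⟩ := hconn.preconnected a b
    induction p with
    | nil => rfl
    | cons hadj _ ih =>
      exact (eq_of_adj_of_dotProduct_signedLaplacian_mulVec_eq_zero G w hsymm hpos hzero
        hadj).trans ih
  obtain ⟨a, ha⟩ := Function.ne_iff.mp hx
  have hn : (n : ℝ) ≠ 0 := Nat.cast_ne_zero.mpr a.pos.ne'
  rw [Finset.sum_congr rfl fun b _ => hconst b a, Finset.sum_const, Finset.card_univ,
    Fintype.card_fin, nsmul_eq_mul] at hsum
  exact ha ((mul_eq_zero.mp hsum).resolve_left hn)
end

theorem multi_positive_edge_resistance_criterion_general (n : ℕ)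
    (G : SimpleGraph (Fin n)) [DecidableRel G.Adj] (hconn : G.Connected)
    (w : Fin n → Fin n → ℝ) (hsymm : ∀ i j : Fin n, w i j = w j i)
    (hpos : ∀ i j : Fin n, G.Adj i j → 0 < w i j)
    (K : ℕ)
    (i j : Fin K → Fin n)
    (c : Fin K → ℝ) (hc : ∀ k, 0 < c k)
    (v : Fin K → Fin n → ℝ)
    (hv : ∀ k, (signedLaplacian G w).mulVec (v k) =
      Pi.single (i k) 1 - Pi.single (j k) 1) :
    ((∑ k, c k * (v k (i k) - v k (j k))) < 1 →
      ∀ x : Fin n → ℝ, x ≠ 0 → ∑ a, x a = 0 →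
        x ⬝ᵥ ((∑ k, c k • vecMulVec (Pi.single (i k) 1 - Pi.single (j k) 1)
                (Pi.single (i k) 1 - Pi.single (j k) 1))
              - signedLaplacian G w).mulVec x < 0) ∧
    ((∃ k, 1 < c k * (v k (i k) - v k (j k))) →
      ∃ μ : ℝ, 0 < μ ∧ ∃ z : Fin n → ℝ, z ≠ 0 ∧
        ((∑ k, c k • vecMulVec (Pi.single (i k) 1 - Pi.single (j k) 1)
                (Pi.single (i k) 1 - Pi.single (j k) 1))
              - signedLaplacian G w).mulVec z = μ • z) := by
  set b : Fin K → Fin n → ℝ := fun k => Pi.single (i k) 1 - Pi.single (j k) 1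
  have hL := posSemidef_signedLaplacian G w hsymm hpos
  have hr : ∀ k, v k (i k) - v k (j k) = b k ⬝ᵥ v k := fun k => by
    simp [b, sub_dotProduct]
  simp only [hr]
  refine ⟨fun hsum x hx hx0 => ?_, fun ⟨k, hk⟩ => ?_⟩
  · exact hL.dotProduct_sum_vecMulVec_sub_mulVec_neg hv (fun k => (hc k).le) hsum
      (dotProduct_signedLaplacian_mulVec_pos G w hconn hsymm hpos hx hx0)
  · exact hL.exists_pos_eigenvalue_sum_vecMulVec_sub hv (fun k => (hc k).le) hk

/-- Effective-resistance stability criterion for several positive edges: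
for J = ∑_k c_k (e_{i_k} - e_{j_k})(e_{i_k} - e_{j_k})ᵀ - L with L the Laplacian of a
connected positively weighted graph, c_k > 0, and r_k the effective resistance between
i_k and j_k, ∑_k c_k r_k < 1 implies J is negative definite on mean-zero vectors, and
c_k r_k > 1 for some k implies J has a strictly positive eigenvalue. -/
theorem multi_positive_edge_resistance_criterion (n : ℕ)
    (G : SimpleGraph (Fin n)) [DecidableRel G.Adj] (hconn : G.Connected)
    (w : Fin n → Fin n → ℝ) (hsymm : ∀ i j : Fin n, w i j = w j i)
    (hpos : ∀ i j : Fin n, G.Adj i j → 0 < w i j)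
    (K : ℕ) (hK : 1 ≤ K)
    (i j : Fin K → Fin n) (hij : ∀ k, i k ≠ j k)
    (c : Fin K → ℝ) (hc : ∀ k, 0 < c k)
    (v : Fin K → Fin n → ℝ)
    (hv : ∀ k, (signedLaplacian G w).mulVec (v k) =
      Pi.single (i k) 1 - Pi.single (j k) 1) :
    ((∑ k, c k * (v k (i k) - v k (j k))) < 1 →
      ∀ x : Fin n → ℝ, x ≠ 0 → ∑ a, x a = 0 →
        x ⬝ᵥ ((∑ k, c k • vecMulVec (Pi.single (i k) 1 - Pi.single (j k) 1)
                (Pi.single (i k) 1 - Pi.single (j k) 1))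
              - signedLaplacian G w).mulVec x < 0) ∧
    ((∃ k, 1 < c k * (v k (i k) - v k (j k))) →
      ∃ μ : ℝ, 0 < μ ∧ ∃ z : Fin n → ℝ, z ≠ 0 ∧
        ((∑ k, c k • vecMulVec (Pi.single (i k) 1 - Pi.single (j k) 1)
                (Pi.single (i k) 1 - Pi.single (j k) 1))
              - signedLaplacian G w).mulVec z = μ • z) :=
  multi_positive_edge_resistance_criterion_general n G hconn w hsymm hpos K i j c hc v hv
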